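/- arXiv:math/0409564 — 2 statements merged into one kernel-verified Lean document; each statement's English description precedes it below -/
import Mathlib

section
/- Let A be a ring with a ring filtration by ideals I^(k) (effective, with I^(k)·I^(l) ⊆ I^(k+l)). If (M, Fil^•) is a filtered A-module that is almost transversal to I^(•) (i.e. I^(1)M ∩ Fil^k M ⊆ Σ_{i+j=k, i>0} I^(i)·Fil^j M for all k), then its saturation (the tensor product filtration Fil̄^k M = Σ_{i+j=k, i≥0} I^(i)·Fil^j M, where I^(0) = A) is transversal to I^(•), i.e. I^(1)M ∩ Fil̄^k M = Σ_{i+j=k, i>0} I^(i)·Fil̄^j M for all k. -/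
/-- Saturation of an almost transversal filtration is transversal. -/
theorem saturation_of_almost_transversal_is_transversal
    {A : Type*} [CommRing A] {M : Type*} [AddCommGroup M] [Module A M]
    (I : ℤ → Ideal A) (hI0 : I 0 = ⊤) (hIanti : Antitone I)
    (hImul : ∀ k l : ℤ, I k * I l ≤ I (k + l))
    (Fil : ℤ → Submodule A M) (hF0 : Fil 0 = ⊤) (hFanti : Antitone Fil)
    (halmost : ∀ k : ℤ, (I 1 • (⊤ : Submodule A M)) ⊓ Fil k ≤
      ⨆ i : ℤ, ⨆ _ : 0 < i, I i • Fil (k - i)) :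
    ∀ k : ℤ, (I 1 • (⊤ : Submodule A M)) ⊓ (⨆ i : ℤ, ⨆ _ : 0 ≤ i, I i • Fil (k - i)) =
      ⨆ i : ℤ, ⨆ _ : 0 < i, I i • (⨆ j : ℤ, ⨆ _ : 0 ≤ j, I j • Fil (k - i - j)) := by
  intro k
  set T : ℤ → Submodule A M := fun k => ⨆ i : ℤ, ⨆ _ : 0 < i, I i • Fil (k - i) with hT
  set S : ℤ → Submodule A M := fun k => ⨆ i : ℤ, ⨆ _ : 0 ≤ i, I i • Fil (k - i) with hS
  -- Fil k ≤ S k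
  have hFS : ∀ k : ℤ, Fil k ≤ S k := by
    intro k
    have : Fil k = I 0 • Fil (k - 0) := by
      rw [hI0, sub_zero, Submodule.top_smul]
    rw [this]
    exact le_iSup_of_le 0 (le_iSup_of_le le_rfl le_rfl)
  -- T k ≤ S k
  have hTS : ∀ k : ℤ, T k ≤ S k := by
    intro k
    refine iSup_le fun i => iSup_le fun hi => ?_
    exact le_iSup_of_le i (le_iSup_of_le hi.le le_rfl)
  -- S k = Fil k ⊔ T k
  have hSsplit : ∀ k : ℤ, S k = Fil k ⊔ T k := by
    intro k
    apply le_antisymm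
    · refine iSup_le fun i => iSup_le fun hi => ?_
      rcases hi.eq_or_lt with h | h
      · rw [← h, hI0, sub_zero, Submodule.top_smul]
        exact le_sup_left
      · exact le_sup_of_le_right (le_iSup_of_le i (le_iSup_of_le h le_rfl))
    · exact sup_le (hFS k) (hTS k)
  -- T k ≤ I 1 • ⊤
  have hTI : ∀ k : ℤ, T k ≤ I 1 • (⊤ : Submodule A M) := by
    intro k
    refine iSup_le fun i => iSup_le fun hi => ?_
    exact Submodule.smul_mono (hIanti hi) le_top
  -- RHS = T k
  have hRHS : (⨆ i : ℤ, ⨆ _ : 0 < i, I i • S (k - i)) = T k := by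
    apply le_antisymm
    · refine iSup_le fun i => iSup_le fun hi => ?_
      rw [hS]
      simp only [Submodule.smul_iSup]
      refine iSup_le fun j => iSup_le fun hj => ?_
      rw [← Submodule.smul_assoc, Ideal.smul_eq_mul]
      have h2 : (I i * I j) • Fil (k - i - j) ≤ I (i + j) • Fil (k - (i + j)) := by
        rw [show k - (i + j) = k - i - j by ring]
        exact Submodule.smul_mono_left (hImul i j)
      exact h2.trans (le_iSup_of_le (i + j) (le_iSup_of_le (by omega) le_rfl))
    · refine iSup_le fun i => iSup_le fun hi => ?_
      exact le_iSup_of_le i (le_iSup_of_le hi (Submodule.smul_mono le_rfl (hFS (k - i))))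
  rw [hRHS]
  -- LHS = T k via modularity
  apply le_antisymm
  · rintro x ⟨hx1, hx2⟩
    have hx2' : x ∈ Fil k ⊔ T k := by rw [← hSsplit k]; exact hx2
    rcases Submodule.mem_sup.mp hx2' with ⟨y, hy, t, ht, rfl⟩
    have hyI : y ∈ I 1 • (⊤ : Submodule A M) := by
      have : y = y + t - t := by abel
      rw [this]
      exact Submodule.sub_mem _ hx1 (hTI k ht)
    have : y ∈ T k := halmost k ⟨hyI, hy⟩
    exact Submodule.add_mem _ this ht
  · exact le_inf (hTI k) (hTS k)
end

section
/- Let F(z₁,z₂) = z₁ + z₂ + (λ+1)(z₁z₂² + z₁²z₂) be a truncated formal group law over a commutative ring R of characteristic 3 containing an element λ. For a one-variable polynomial g, set δ(g) = g(z₁) − g(F(z₁,z₂)) + g(z₂) regarded in R[z₁,z₂]/(z₁⁴, z₂⁴, monomials of total degree ≥ 5). Then δ(3z + (1+λ)z³) = 0 in this quotient; in particular in characteristic 3, δ((1+λ)z³) = 0, i.e. (1+λ)·(F(z₁,z₂)³ − z₁³ − z₂³) lies in the truncation ideal. -/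
open MvPolynomial

/-- For the truncated formal group law F(z₁,z₂) = z₁ + z₂ + (λ+1)(z₁z₂² + z₁²z₂) of the
Legendre elliptic curve over a ring of characteristic 3, δ(3z + (1+λ)z³) = 0 modulo the
truncation ideal (z₁⁴, z₂⁴, monomials of total degree ≥ 5); in particular
(1+λ)·(F³ − z₁³ − z₂³) lies in the truncation ideal. -/
theorem legendre_char3_closed_invariant_form {R : Type*} [CommRing R] [CharP R 3]
    (l : R) :
    let F : MvPolynomial (Fin 2) R :=
      X 0 + X 1 + C (l + 1) * (X 0 * (X 1) ^ 2 + (X 0) ^ 2 * X 1)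
    let T : Ideal (MvPolynomial (Fin 2) R) :=
      Ideal.span ({(X 0) ^ 4, (X 1) ^ 4} ∪
        Set.range (fun i : Fin 6 => (X 0) ^ (i : ℕ) * (X 1) ^ (5 - (i : ℕ))))
    ((3 * X 0 + C (l + 1) * (X 0) ^ 3)
        - (3 * F + C (l + 1) * F ^ 3)
        + (3 * X 1 + C (l + 1) * (X 1) ^ 3) ∈ T)
    ∧ (C (l + 1) * (F ^ 3 - (X 0) ^ 3 - (X 1) ^ 3) ∈ T) := by
  intro F T
  have h3 : (3 : MvPolynomial (Fin 2) R) = 0 := by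
    have : ((3 : ℕ) : MvPolynomial (Fin 2) R) = 0 := by
      exact_mod_cast CharP.cast_eq_zero (MvPolynomial (Fin 2) R) 3
    simpa using this
  have hx0 : ((X 0 : MvPolynomial (Fin 2) R)) ^ 4 ∈ T :=
    Ideal.subset_span (Or.inl (Or.inl rfl))
  have hx1 : ((X 1 : MvPolynomial (Fin 2) R)) ^ 4 ∈ T :=
    Ideal.subset_span (Or.inl (Or.inr rfl))
  have key : F ^ 3 - (X 0 : MvPolynomial (Fin 2) R) ^ 3 - (X 1) ^ 3 =
      C (l + 1) ^ 3 * ((X 0) ^ 3 * (X 1) ^ 6 + (X 0) ^ 6 * (X 1) ^ 3) := by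
    show (X 0 + X 1 + C (l + 1) * (X 0 * (X 1) ^ 2 + (X 0) ^ 2 * X 1)) ^ 3
        - (X 0 : MvPolynomial (Fin 2) R) ^ 3 - (X 1) ^ 3 = _
    linear_combination ((X 0 : MvPolynomial (Fin 2) R) ^ 2 * X 1 + X 0 * (X 1) ^ 2
      + (X 0 + X 1) ^ 2 * (C (l + 1) * (X 0 * (X 1) ^ 2 + (X 0) ^ 2 * X 1))
      + (X 0 + X 1) * (C (l + 1) * (X 0 * (X 1) ^ 2 + (X 0) ^ 2 * X 1)) ^ 2
      + C (l + 1) ^ 3 * ((X 0) ^ 4 * (X 1) ^ 5 + (X 0) ^ 5 * (X 1) ^ 4)) * h3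
  have hmem : C (l + 1) * (F ^ 3 - (X 0 : MvPolynomial (Fin 2) R) ^ 3 - (X 1) ^ 3) ∈ T := by
    rw [key]
    have : C (l + 1) * (C (l + 1) ^ 3 * ((X 0 : MvPolynomial (Fin 2) R) ^ 3 * (X 1) ^ 6
        + (X 0) ^ 6 * (X 1) ^ 3)) =
        (C (l + 1) ^ 4 * (X 0) ^ 3 * (X 1) ^ 2) * (X 1) ^ 4
        + (C (l + 1) ^ 4 * (X 0) ^ 2 * (X 1) ^ 3) * (X 0) ^ 4 := by ring
    rw [this]
    exact add_mem (Ideal.mul_mem_left _ _ hx1) (Ideal.mul_mem_left _ _ hx0)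
  refine ⟨?_, hmem⟩
  have heq : (3 * X 0 + C (l + 1) * (X 0) ^ 3) - (3 * F + C (l + 1) * F ^ 3)
      + (3 * X 1 + C (l + 1) * (X 1) ^ 3)
      = -(C (l + 1) * (F ^ 3 - (X 0 : MvPolynomial (Fin 2) R) ^ 3 - (X 1) ^ 3)) := by
    linear_combination ((X 0 : MvPolynomial (Fin 2) R) - F + X 1) * h3
  rw [heq]
  exact neg_mem hmem
end
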